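/- Suppose k ≥ 2, k < m < 2k, and ℓ > 1. Every fault-free tiling of an m×(kℓ) rectangle by k×1 tiles contains exactly k vertical tiles. -/

import Mathlib

/-- The cells of an `m × n` rectangle: `(row, column)` with `row < m`, `column < n`. -/
def grid (m n : ℕ) : Finset (ℕ × ℕ) := Finset.range m ×ˢ Finset.range n

/-- A horizontal `k × 1` tile: `k` consecutive cells in one row. -/
def IsHTile (k : ℕ) (t : Finset (ℕ × ℕ)) : Prop :=
  ∃ i j : ℕ, t = (Finset.range k).image fun s => (i, j + s)

/-- A vertical `k × 1` tile: `k` consecutive cells in one column. -/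
def IsVTile (k : ℕ) (t : Finset (ℕ × ℕ)) : Prop :=
  ∃ i j : ℕ, t = (Finset.range k).image fun s => (i + s, j)

/-- A tiling of the `m × n` rectangle by `k × 1` tiles. -/
def IsTiling (m n k : ℕ) (T : Finset (Finset (ℕ × ℕ))) : Prop :=
  (∀ t ∈ T, IsHTile k t ∨ IsVTile k t) ∧
  (T : Set (Finset (ℕ × ℕ))).PairwiseDisjoint id ∧
  T.biUnion id = grid m n

/-- The number of tilings of the `m × n` rectangle by `k × 1` tiles. -/
noncomputable def numTilings (m n k : ℕ) : ℕ :=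
  Nat.card {T : Finset (Finset (ℕ × ℕ)) // IsTiling m n k T}

/-- The tiling `T` has a fault at `x = a`: every tile lies entirely in
columns `< a` or entirely in columns `≥ a`. -/
def HasFaultAt (T : Finset (Finset (ℕ × ℕ))) (a : ℕ) : Prop :=
  ∀ t ∈ T, (∀ c ∈ t, c.2 < a) ∨ (∀ c ∈ t, a ≤ c.2)

/-- A tiling of a rectangle with `n` columns is fault-free. -/
def FaultFree (n : ℕ) (T : Finset (Finset (ℕ × ℕ))) : Prop :=
  ∀ a : ℕ, 0 < a → a < n → ¬ HasFaultAt T a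

/-- The number of fault-free tilings of the `m × n` rectangle by `k × 1` tiles. -/
noncomputable def numFFTilings (m n k : ℕ) : ℕ :=
  Nat.card {T : Finset (Finset (ℕ × ℕ)) // IsTiling m n k T ∧ FaultFree n T}

/-!
Fix a row `r` and a line `x = a`, and let `vLeft k T r a` count the vertical tiles meeting row `r`
to the left of the line. The `a` cells of row `r` left of the line are covered by these tiles (one
cell each) and by horizontal tiles, which contribute multiples of `k` unless one of them straddles
the line, contributing `a - j` with `0 < a - j < k`. So `vLeft k T r a ≡ a (mod k)` exactly when no
tile straddles `x = a` in row `r`, and if this holds in every row then `x = a` is a fault.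

Since `m < 2k`, every vertical tile meets row `k - 1`, and meets exactly one of the rows `r` and
`r + k` whenever `r + k < m`. Write `V a = vLeft k T (k - 1) a`, the number of vertical tiles in the
columns left of `x = a`. The right edge gives `V (kℓ) ≡ 0`; `V (kℓ) = 0` would make `x = k` a
fault. If `V (kℓ) > k`, let `c` be the column of the `(k+1)`-st vertical tile from the left, so
`V c = k`. The rows covered by that tile give `vLeft k T r c ≡ c`, in particular `c ≡ V c ≡ 0`, and
the pairing `r ↔ r + k` carries `vLeft k T r c ≡ 0` to the remaining rows, so `x = c` is a fault.
Hence `V (kℓ) = k`.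
-/

open Finset

def vtile (k i j : ℕ) : Finset (ℕ × ℕ) := (range k).image fun s => (i + s, j)

def htile (k i j : ℕ) : Finset (ℕ × ℕ) := (range k).image fun s => (i, j + s)

lemma mem_vtile {k i j : ℕ} {c : ℕ × ℕ} : c ∈ vtile k i j ↔ c.2 = j ∧ i ≤ c.1 ∧ c.1 < i + k := by
  obtain ⟨x, y⟩ := c
  simp only [vtile, mem_image, mem_range, Prod.mk.injEq]
  constructor
  · rintro ⟨s, hs, rfl, rfl⟩
    omega
  · rintro ⟨rfl, hi, hik⟩
    exact ⟨x - i, by omega, by omega, rfl⟩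

lemma mem_htile {k i j : ℕ} {c : ℕ × ℕ} : c ∈ htile k i j ↔ c.1 = i ∧ j ≤ c.2 ∧ c.2 < j + k := by
  obtain ⟨x, y⟩ := c
  simp only [htile, mem_image, mem_range, Prod.mk.injEq]
  constructor
  · rintro ⟨s, hs, rfl, rfl⟩
    omega
  · rintro ⟨rfl, hj, hjk⟩
    exact ⟨y - j, by omega, rfl, by omega⟩

lemma card_htile (k i j : ℕ) : #(htile k i j) = k := by
  rw [htile, card_image_of_injective _ fun s s' h => by simpa using h, card_range]

-- Only used for `0 < a`: at `a = 0` the truncated `a - 1` makes this mean `(r, 0) ∈ t`.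
def Straddles (t : Finset (ℕ × ℕ)) (r a : ℕ) : Prop := (r, a - 1) ∈ t ∧ (r, a) ∈ t

lemma not_straddles_vtile {k i j r a : ℕ} (ha : 0 < a) : ¬Straddles (vtile k i j) r a := by
  simp only [Straddles, mem_vtile]
  omega

lemma straddles_htile_iff {k i j r a : ℕ} (ha : 0 < a) :
    Straddles (htile k i j) r a ↔ i = r ∧ j < a ∧ a < j + k := by
  simp only [Straddles, mem_htile]
  grind

def rowPrefix (r a : ℕ) : Finset (ℕ × ℕ) := {r} ×ˢ range a

lemma mem_rowPrefix {r a : ℕ} {c : ℕ × ℕ} : c ∈ rowPrefix r a ↔ c.1 = r ∧ c.2 < a := by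
  simp only [rowPrefix, mem_product, mem_singleton, mem_range]

lemma card_rowPrefix (r a : ℕ) : #(rowPrefix r a) = a := by
  simp [rowPrefix]

lemma vtile_inter_rowPrefix (k i j r a : ℕ) :
    vtile k i j ∩ rowPrefix r a = if i ≤ r ∧ r < i + k ∧ j < a then {(r, j)} else ∅ := by
  ext ⟨x, y⟩
  split_ifs <;> simp only [mem_inter, mem_vtile, mem_rowPrefix, mem_singleton, Prod.mk.injEq,
    notMem_empty] <;> grind

lemma htile_inter_rowPrefix (k i j r a : ℕ) :
    htile k i j ∩ rowPrefix r a = if i = r then htile (min k (a - j)) i j else ∅ := by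
  ext ⟨x, y⟩
  split_ifs <;> simp only [mem_inter, mem_htile, mem_rowPrefix, notMem_empty] <;>
    grind

lemma cast_card_htile_inter_rowPrefix (k i j r a : ℕ) :
    (#(htile k i j ∩ rowPrefix r a) : ZMod k) =
      if i = r ∧ j < a ∧ a < j + k then ((a - j : ℕ) : ZMod k) else 0 := by
  rw [htile_inter_rowPrefix]
  by_cases hi : i = r
  · subst hi
    simp only [if_true, true_and, card_htile]
    split_ifs with h
    · rw [min_eq_right (by omega : a - j ≤ k)]
    · rcases le_or_gt a j with h' | h'
      · simp [Nat.sub_eq_zero_of_le h']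
      · rw [min_eq_left (by omega : k ≤ a - j), ZMod.natCast_self]
  · simp [hi]

lemma mem_grid {m n : ℕ} {c : ℕ × ℕ} : c ∈ grid m n ↔ c.1 < m ∧ c.2 < n := by
  simp [grid, mem_product]

lemma Nat.exists_eq_and_lt_succ_of_lt {f : ℕ → ℕ} (h0 : f 0 = 0) (hf : ∀ a, f (a + 1) ≤ f a + 1)
    {k n : ℕ} (hn : k < f n) : ∃ c < n, f c = k ∧ k < f (c + 1) := by
  induction n with
  | zero => omega
  | succ n ih =>
    by_cases h : k < f n
    · obtain ⟨c, hc, hfc⟩ := ih h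
      exact ⟨c, by omega, hfc⟩
    · exact ⟨n, by omega, by have := hf n; omega, hn⟩

open Classical in
noncomputable def vLeft (k : ℕ) (T : Finset (Finset (ℕ × ℕ))) (r a : ℕ) : ℕ :=
  #{t ∈ T | IsVTile k t ∧ ∃ j < a, (r, j) ∈ t}

lemma exists_lt_mem_vtile {k i j r a : ℕ} :
    (∃ j' < a, (r, j') ∈ vtile k i j) ↔ i ≤ r ∧ r < i + k ∧ j < a := by
  simp only [mem_vtile]
  constructor
  · rintro ⟨j', hj', rfl, hi, hik⟩
    exact ⟨hi, hik, hj'⟩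
  · rintro ⟨hi, hik, hj⟩
    exact ⟨j, hj, rfl, hi, hik⟩

section

variable {k : ℕ} {T : Finset (Finset (ℕ × ℕ))}

lemma vLeft_zero (r : ℕ) : vLeft k T r 0 = 0 := by
  simp [vLeft]

lemma vLeft_monotone (r : ℕ) : Monotone (vLeft k T r) := fun a a' h => by
  unfold vLeft
  refine card_le_card fun t ht => ?_
  simp only [mem_filter] at ht ⊢
  obtain ⟨htT, hv, j, hj, hc⟩ := ht
  exact ⟨htT, hv, j, by omega, hc⟩

lemma exists_vtile_of_vLeft_lt_succ {r a : ℕ} (h : vLeft k T r a < vLeft k T r (a + 1)) :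
    ∃ t ∈ T, IsVTile k t ∧ (r, a) ∈ t := by
  obtain ⟨t, ht, ht'⟩ := exists_mem_notMem_of_card_lt_card h
  simp only [mem_filter, not_and] at ht ht'
  obtain ⟨htT, hv, j, hj, hc⟩ := ht
  obtain rfl : j = a := by
    by_contra hne
    exact ht' htT hv ⟨j, by omega, hc⟩
  exact ⟨t, htT, hv, hc⟩

end

namespace IsTiling

variable {m n k : ℕ} {T : Finset (Finset (ℕ × ℕ))}

lemma subset_grid (hT : IsTiling m n k T) {t : Finset (ℕ × ℕ)} (ht : t ∈ T) :
    t ⊆ grid m n :=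
  hT.2.2 ▸ subset_biUnion_of_mem id ht

lemma lt_of_mem (hT : IsTiling m n k T) {t : Finset (ℕ × ℕ)} (ht : t ∈ T) {c : ℕ × ℕ}
    (hc : c ∈ t) : c.1 < m ∧ c.2 < n :=
  mem_grid.mp (hT.subset_grid ht hc)

lemma eq_of_mem_of_mem (hT : IsTiling m n k T) {t t' : Finset (ℕ × ℕ)} (ht : t ∈ T)
    (ht' : t' ∈ T) {c : ℕ × ℕ} (hc : c ∈ t) (hc' : c ∈ t') : t = t' := by
  by_contra hne
  exact disjoint_left.mp (hT.2.1 ht ht' hne) hc hc'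

lemma add_le_of_vtile_mem (hT : IsTiling m n k T) (hk : 0 < k) {i j : ℕ}
    (ht : vtile k i j ∈ T) : i + k ≤ m := by
  have hlast : (i + (k - 1), j) ∈ vtile k i j := mem_vtile.mpr ⟨rfl, by omega, by omega⟩
  have := (hT.lt_of_mem ht hlast).1
  omega

lemma sum_card_inter (hT : IsTiling m n k T) {S : Finset (ℕ × ℕ)} (hS : S ⊆ grid m n) :
    ∑ t ∈ T, #(t ∩ S) = #S := by
  classical
  have hdisj : (T : Set (Finset (ℕ × ℕ))).PairwiseDisjoint (· ∩ S) := fun t ht t' ht' h =>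
    (hT.2.1 ht ht' h).mono inter_subset_left inter_subset_left
  rw [← card_biUnion hdisj, ← biUnion_inter, show T.biUnion (fun t => t) = grid m n from hT.2.2,
    inter_eq_right.mpr hS]

open Classical in
lemma vLeft_add_sum_horizontal (hT : IsTiling m n k T) {r a : ℕ} (hr : r < m) (ha : a ≤ n) :
    vLeft k T r a + ∑ t ∈ T with ¬IsVTile k t, #(t ∩ rowPrefix r a) = a := by
  have hS : rowPrefix r a ⊆ grid m n := fun c hc => by
    rw [mem_rowPrefix] at hc
    exact mem_grid.mpr (by omega)
  have hcount := hT.sum_card_inter hS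
  rw [← sum_filter_add_sum_filter_not T (IsVTile k), card_rowPrefix] at hcount
  suffices vLeft k T r a = ∑ t ∈ T with IsVTile k t, #(t ∩ rowPrefix r a) by rw [this, hcount]
  rw [vLeft, ← filter_filter, card_filter]
  refine sum_congr rfl fun t ht => ?_
  obtain ⟨i, j, rfl⟩ : ∃ i j, t = vtile k i j := (mem_filter.mp ht).2
  simp only [vtile_inter_rowPrefix, exists_lt_mem_vtile, apply_ite card, card_singleton, card_empty]

lemma cast_vLeft_eq_iff (hT : IsTiling m n k T) {r a : ℕ} (hr : r < m) (ha0 : 0 < a)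
    (ha : a ≤ n) :
    (vLeft k T r a : ZMod k) = a ↔ ∀ t ∈ T, ¬Straddles t r a := by
  classical
  have hsum := congrArg (Nat.cast : ℕ → ZMod k) (hT.vLeft_add_sum_horizontal hr ha)
  push_cast at hsum
  have hterm : ∀ t ∈ T, ¬IsVTile k t → ∃ j, (#(t ∩ rowPrefix r a) : ZMod k) =
      if Straddles t r a then ((a - j : ℕ) : ZMod k) else 0 := by
    intro t ht hv
    obtain ⟨i, j, rfl⟩ : ∃ i j, t = htile k i j := (hT.1 t ht).resolve_right hv
    exact ⟨j, by simp only [cast_card_htile_inter_rowPrefix, straddles_htile_iff ha0]⟩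
  constructor
  · rintro h t₀ ht₀ ⟨h₁, h₂⟩
    have hv₀ : ¬IsVTile k t₀ := by
      rintro ⟨i, j, rfl⟩
      exact not_straddles_vtile ha0 ⟨h₁, h₂⟩
    obtain ⟨i, j, rfl⟩ : ∃ i j, t₀ = htile k i j := (hT.1 t₀ ht₀).resolve_right hv₀
    obtain ⟨rfl, hja, hajk⟩ := (straddles_htile_iff ha0).mp ⟨h₁, h₂⟩
    have hsingle : ∑ t ∈ T with ¬IsVTile k t, (#(t ∩ rowPrefix i a) : ZMod k) =
        ((a - j : ℕ) : ZMod k) := by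
      rw [sum_eq_single_of_mem _ (mem_filter.mpr ⟨ht₀, hv₀⟩)]
      · rw [cast_card_htile_inter_rowPrefix, if_pos ⟨rfl, hja, hajk⟩]
      · intro t ht hne
        obtain ⟨htT, hv⟩ := mem_filter.mp ht
        obtain ⟨j', hj'⟩ := hterm t htT hv
        rw [hj', if_neg]
        rintro ⟨h₁', -⟩
        exact hne (hT.eq_of_mem_of_mem htT ht₀ h₁' h₁)
    rw [hsingle, h, add_eq_left, ZMod.natCast_eq_zero_iff] at hsum
    exact absurd (Nat.le_of_dvd (by omega) hsum) (by omega)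
  · intro h
    rwa [sum_eq_zero fun t ht => ?_, add_zero] at hsum
    obtain ⟨htT, hv⟩ := mem_filter.mp ht
    obtain ⟨j, hj⟩ := hterm t htT hv
    rw [hj, if_neg (h t htT)]

lemma hasFaultAt_of_forall_cast_vLeft (hT : IsTiling m n k T) {a : ℕ} (ha0 : 0 < a)
    (ha : a ≤ n) (h : ∀ r < m, (vLeft k T r a : ZMod k) = a) : HasFaultAt T a := by
  intro t ht
  rcases hT.1 t ht with ⟨i, j, rfl⟩ | ⟨i, j, rfl⟩
  · by_cases hcross : j < a ∧ a < j + k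
    · have him : i < m := (hT.lt_of_mem ht (mem_htile.mpr ⟨rfl, le_rfl, by omega⟩ :
        (i, j) ∈ htile k i j)).1
      exact absurd ((straddles_htile_iff ha0).mpr ⟨rfl, hcross⟩)
        ((hT.cast_vLeft_eq_iff him ha0 ha).mp (h i him) _ ht)
    · rcases le_or_gt a j with hja | hja
      · right
        intro c hc
        have := mem_htile.mp hc
        omega
      · left
        intro c hc
        have := mem_htile.mp hc
        omega
  · rcases lt_or_ge j a with hja | hja
    · left
      intro c hc
      rwa [(mem_vtile.mp hc).1]
    · right
      intro c hc
      rwa [(mem_vtile.mp hc).1]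

open Classical in
lemma vLeft_succ_le (hT : IsTiling m n k T) (r a : ℕ) :
    vLeft k T r (a + 1) ≤ vLeft k T r a + 1 := by
  calc vLeft k T r (a + 1)
        ≤ #({t ∈ T | IsVTile k t ∧ ∃ j < a, (r, j) ∈ t} ∪ {t ∈ T | (r, a) ∈ t}) := by
        refine card_le_card fun t ht => ?_
        simp only [mem_filter, mem_union] at ht ⊢
        obtain ⟨htT, hv, j, hj, hc⟩ := ht
        rcases (Nat.lt_succ_iff_lt_or_eq.mp hj) with hj | rfl
        · exact .inl ⟨htT, hv, j, hj, hc⟩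
        · exact .inr ⟨htT, hc⟩
    _ ≤ vLeft k T r a + #{t ∈ T | (r, a) ∈ t} := card_union_le _ _
    _ ≤ vLeft k T r a + 1 := by
        gcongr
        refine card_le_one.mpr fun t ht t' ht' => ?_
        rw [mem_filter] at ht ht'
        exact hT.eq_of_mem_of_mem ht.1 ht'.1 ht.2 ht'.2

lemma cast_vLeft_of_mem_vtile (hT : IsTiling m n k T) {i r c : ℕ} (ht : vtile k i c ∈ T)
    (hi : i ≤ r) (hr : r < i + k) (hc0 : 0 < c) (hcn : c ≤ n) :
    (vLeft k T r c : ZMod k) = c := by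
  have hrc : (r, c) ∈ vtile k i c := mem_vtile.mpr ⟨rfl, hi, hr⟩
  refine (hT.cast_vLeft_eq_iff (hT.lt_of_mem ht hrc).1 hc0 hcn).mpr fun t htT ⟨h₁, h₂⟩ => ?_
  rw [hT.eq_of_mem_of_mem htT ht h₂ hrc] at h₁
  exact not_straddles_vtile hc0 ⟨h₁, hrc⟩

lemma dvd_vLeft (hT : IsTiling m n k T) {r : ℕ} (hr : r < m) (hn : 0 < n) (hkn : k ∣ n) :
    k ∣ vLeft k T r n := by
  refine (ZMod.natCast_eq_zero_iff _ _).mp ?_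
  rw [(hT.cast_vLeft_eq_iff hr hn le_rfl).mpr fun t ht hc => (hT.lt_of_mem ht hc.2).2.false,
    (ZMod.natCast_eq_zero_iff _ _).mpr hkn]

lemma exists_eq_vtile (hT : IsTiling m n k T) (hm : m < 2 * k) {t : Finset (ℕ × ℕ)}
    (ht : t ∈ T) (hv : IsVTile k t) : ∃ i j, t = vtile k i j ∧ i + k ≤ m ∧ i < k ∧ j < n := by
  obtain ⟨i, j, rfl⟩ := hv
  have hk : 0 < k := by omega
  have hi := hT.add_le_of_vtile_mem hk ht
  have hj := (hT.lt_of_mem ht (mem_vtile.mpr ⟨rfl, le_rfl, by omega⟩ : (i, j) ∈ vtile k i j)).2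
  exact ⟨i, j, rfl, hi, by omega, hj⟩

lemma mem_middle_row (hT : IsTiling m n k T) (hm : m < 2 * k) {t : Finset (ℕ × ℕ)}
    (ht : t ∈ T) (hv : IsVTile k t) {r j : ℕ} (hc : (r, j) ∈ t) : (k - 1, j) ∈ t := by
  obtain ⟨i, j', rfl, -, hik, -⟩ := hT.exists_eq_vtile hm ht hv
  have := mem_vtile.mp hc
  exact mem_vtile.mpr ⟨this.1, by omega, by omega⟩

lemma vLeft_le_vLeft_middle (hT : IsTiling m n k T) (hm : m < 2 * k) (r a : ℕ) :
    vLeft k T r a ≤ vLeft k T (k - 1) a := by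
  unfold vLeft
  refine card_le_card fun t ht => ?_
  simp only [mem_filter] at ht ⊢
  obtain ⟨htT, hv, j, hj, hc⟩ := ht
  exact ⟨htT, hv, j, hj, hT.mem_middle_row hm htT hv hc⟩

open Classical in
lemma vLeft_add_vLeft_add_eq (hT : IsTiling m n k T) (hm : m < 2 * k) {r : ℕ} (hr : r + k < m)
    (a : ℕ) : vLeft k T r a + vLeft k T (r + k) a = vLeft k T (k - 1) a := by
  unfold vLeft
  rw [← card_union_of_disjoint]
  · congr 1
    ext t
    simp only [mem_union, mem_filter]
    by_cases htv : t ∈ T ∧ IsVTile k t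
    · obtain ⟨i, j, rfl, hi, hik, -⟩ := hT.exists_eq_vtile hm htv.1 htv.2
      simp only [htv, true_and, exists_lt_mem_vtile]
      omega
    · tauto
  · refine disjoint_filter.mpr fun t ht ⟨hv, hrow⟩ ⟨_, hrow'⟩ => ?_
    obtain ⟨i, j, rfl, hi, hik, -⟩ := hT.exists_eq_vtile hm ht hv
    rw [exists_lt_mem_vtile] at hrow hrow'
    omega

lemma ncard_vtiles_eq (hT : IsTiling m n k T) (hm : m < 2 * k) :
    {t | t ∈ T ∧ IsVTile k t}.ncard = vLeft k T (k - 1) n := by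
  classical
  rw [vLeft, ← Set.ncard_coe_finset, coe_filter]
  congr 1
  ext t
  refine ⟨fun ⟨ht, hv⟩ => ⟨ht, hv, ?_⟩, fun ⟨ht, hv, _⟩ => ⟨ht, hv⟩⟩
  obtain ⟨i, j, rfl, -, hik, hj⟩ := hT.exists_eq_vtile hm ht hv
  exact ⟨j, hj, mem_vtile.mpr ⟨rfl, by omega, by omega⟩⟩

lemma hasFaultAt_of_vtile_mem (hT : IsTiling m n k T) (hm : m < 2 * k) {i c : ℕ}
    (ht : vtile k i c ∈ T) (hV : vLeft k T (k - 1) c = k) (hc0 : 0 < c) (hcn : c ≤ n) :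
    HasFaultAt T c := by
  have hi := hT.add_le_of_vtile_mem (by omega) ht
  have hunder : ∀ r, i ≤ r → r < i + k → (vLeft k T r c : ZMod k) = c :=
    fun r h h' => hT.cast_vLeft_of_mem_vtile ht h h' hc0 hcn
  have hc : (c : ZMod k) = 0 := by
    rw [← hunder (k - 1) (by omega) (by omega), hV, ZMod.natCast_self]
  have hpair : ∀ r, r + k < m → (vLeft k T r c : ZMod k) = -(vLeft k T (r + k) c) :=
    fun r hr => eq_neg_of_add_eq_zero_left <| by
      rw [← Nat.cast_add, hT.vLeft_add_vLeft_add_eq hm hr, hV, ZMod.natCast_self]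
  refine hT.hasFaultAt_of_forall_cast_vLeft hc0 hcn fun r hr => ?_
  rw [hc]
  rcases lt_or_ge r i with hri | hri
  · rw [hpair r (by omega), hunder (r + k) (by omega) (by omega), hc, neg_zero]
  rcases lt_or_ge r (i + k) with hrik | hrik
  · rw [hunder r hri hrik, hc]
  obtain ⟨r, rfl⟩ : ∃ r', r = r' + k := ⟨r - k, by omega⟩
  rw [← neg_eq_zero, ← hpair r hr, hunder r (by omega) (by omega), hc]

lemma vLeft_middle_le (hT : IsTiling m n k T) (hm : m < 2 * k) (hff : FaultFree n T) :
    vLeft k T (k - 1) n ≤ k := by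
  by_contra! h
  obtain ⟨c, hcn, hVc, hVc1⟩ :=
    Nat.exists_eq_and_lt_succ_of_lt (vLeft_zero _) (hT.vLeft_succ_le _) h
  obtain ⟨t, ht, hv, hmem⟩ := exists_vtile_of_vLeft_lt_succ (hVc.trans_lt hVc1)
  obtain ⟨i, j, rfl, -⟩ := hT.exists_eq_vtile hm ht hv
  obtain rfl : c = j := (mem_vtile.mp hmem).1
  have hc0 : 0 < c := Nat.pos_of_ne_zero fun hc => by
    rw [hc, vLeft_zero] at hVc
    omega
  exact hff c hc0 hcn (hT.hasFaultAt_of_vtile_mem hm ht hVc hc0 hcn.le)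

lemma vLeft_middle_ne_zero (hT : IsTiling m n k T) (hm : m < 2 * k) (hff : FaultFree n T)
    (hkn : k < n) : vLeft k T (k - 1) n ≠ 0 := by
  intro h0
  have hk : 0 < k := by omega
  refine hff k hk hkn (hT.hasFaultAt_of_forall_cast_vLeft hk hkn.le fun r _ => ?_)
  have : vLeft k T r k = 0 := by
    have := (hT.vLeft_le_vLeft_middle hm r k).trans (vLeft_monotone _ hkn.le)
    omega
  rw [this, Nat.cast_zero, ZMod.natCast_self]

end IsTiling

theorem stmt_10_general (k m l : ℕ) (h1 : k < m) (h2 : m < 2 * k) (hl : 1 < l)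
    (T : Finset (Finset (ℕ × ℕ))) (hT : IsTiling m (k * l) k T)
    (hff : FaultFree (k * l) T) :
    {t : Finset (ℕ × ℕ) | t ∈ T ∧ IsVTile k t}.ncard = k := by
  have hkl : k < k * l := lt_mul_of_one_lt_right (by omega) hl
  have hdvd := hT.dvd_vLeft (by omega : k - 1 < m) (by omega) (dvd_mul_right k l)
  have hne := hT.vLeft_middle_ne_zero h2 hff hkl
  rw [hT.ncard_vtiles_eq h2]
  exact le_antisymm (hT.vLeft_middle_le h2 hff) (Nat.le_of_dvd (Nat.pos_of_ne_zero hne) hdvd)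

theorem stmt_10 (k m l : ℕ) (hk : 2 ≤ k) (h1 : k < m) (h2 : m < 2 * k) (hl : 1 < l)
    (T : Finset (Finset (ℕ × ℕ))) (hT : IsTiling m (k * l) k T)
    (hff : FaultFree (k * l) T) :
    {t : Finset (ℕ × ℕ) | t ∈ T ∧ IsVTile k t}.ncard = k :=
  stmt_10_general k m l h1 h2 hl T hT hff
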